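/- Suppose $1 \ne \frac{p_0}{q_0} \in Q^\times$ fixes $\phi = (\phi_p) \in X_\infty(R)$, i.e. $\phi_{p p_0}(q_0 x) = \phi_p(x)$ for all $p \in R^\times$, $x \in R$. Then $\phi_{p p_0}((p_0 - q_0) x) = 1$ for all $p \in R^\times$ and $x \in R$. -/

import Mathlib

theorem map_sub_eq_one_of_map_eq {A M : Type*} [AddGroup A] [MonoidWithZero M]
    [IsRightCancelMulZero M] {ψ : A → M} (hψ : ∀ x y, ψ (x + y) = ψ x * ψ y) {a b : A}
    (hb : ψ b ≠ 0) (hab : ψ a = ψ b) : ψ (a - b) = 1 :=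
  mul_right_cancel₀ hb <| by rw [← hψ, sub_add_cancel, hab, one_mul]

theorem stmt4_general (R : Type*) [CommRing R] [IsDomain R]
    (φ : {p : R // p ≠ 0} → R → ℂ)
    (habs : ∀ p x, ‖φ p x‖ = 1)
    (hchar : ∀ p x y, φ p (x + y) = φ p x * φ p y)
    (hcompat : ∀ (p q : {p : R // p ≠ 0}) (c : R), c * (p : R) = (q : R) →
      ∀ x, φ q (c * x) = φ p x)
    (p₀ q₀ : R) (hp₀ : p₀ ≠ 0)
    (hfix : ∀ p : {p : R // p ≠ 0}, ∀ x : R,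
      φ ⟨(p : R) * p₀, mul_ne_zero p.2 hp₀⟩ (q₀ * x) = φ p x) :
    ∀ p : {p : R // p ≠ 0}, ∀ x : R,
      φ ⟨(p : R) * p₀, mul_ne_zero p.2 hp₀⟩ ((p₀ - q₀) * x) = 1 := by
  intro p x
  set q : {p : R // p ≠ 0} := ⟨(p : R) * p₀, mul_ne_zero p.2 hp₀⟩
  have hq₀x : φ q (q₀ * x) ≠ 0 := norm_ne_zero_iff.mp (by rw [habs]; exact one_ne_zero)
  have hpq : φ q (p₀ * x) = φ q (q₀ * x) :=
    (hcompat p q p₀ (mul_comm _ _) x).trans (hfix p x).symm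
  rw [sub_mul]
  exact map_sub_eq_one_of_map_eq (hchar q) hq₀x hpq

/-- If `p₀/q₀ ≠ 1` fixes `φ = (φ_p) ∈ X_∞(R)`, then `φ_{p p₀}((p₀ - q₀) x) = 1` for all
`p ∈ R^×` and `x ∈ R`. -/
theorem stmt4 (R : Type*) [CommRing R] [IsDomain R]
    (φ : {p : R // p ≠ 0} → R → ℂ)
    (habs : ∀ p x, ‖φ p x‖ = 1)
    (hchar : ∀ p x y, φ p (x + y) = φ p x * φ p y)
    (hcompat : ∀ (p q : {p : R // p ≠ 0}) (c : R), c * (p : R) = (q : R) →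
      ∀ x, φ q (c * x) = φ p x)
    (p₀ q₀ : R) (hp₀ : p₀ ≠ 0) (hq₀ : q₀ ≠ 0) (hne : p₀ ≠ q₀)
    (hfix : ∀ p : {p : R // p ≠ 0}, ∀ x : R,
      φ ⟨(p : R) * p₀, mul_ne_zero p.2 hp₀⟩ (q₀ * x) = φ p x) :
    ∀ p : {p : R // p ≠ 0}, ∀ x : R,
      φ ⟨(p : R) * p₀, mul_ne_zero p.2 hp₀⟩ ((p₀ - q₀) * x) = 1 :=
  stmt4_general R φ habs hchar hcompat p₀ q₀ hp₀ hfix
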